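/- For every x > 0, ψ₂(x) + ψ₁(x)² > 0. -/

import Mathlib

/-- The polygamma function `ψₙ`: the `(n+1)`-st derivative of `log ∘ Γ`. -/
noncomputable def polygamma (n : ℕ) (x : ℝ) : ℝ :=
  iteratedDeriv (n + 1) (fun y => Real.log (Real.Gamma y)) x

/-!
Write `S = hurwitzSum 2`, `T = hurwitzSum 3`, so `S x = ∑ₖ 1/(x+k)²`, and `H = digammaSeries`.
On `(0, ∞)` one has `ψ₁ = S`, hence `ψ₂ = S' = -2T`: both `ψ₀` and `H` increase by `1/x` under
`x ↦ x + 1`, so `ψ₀ - H` is `1`-periodic. Its derivative `ψ₁ - S` is periodic as well, hence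
`≥ -S(x+n) → 0` because `ψ₁ ≥ 0` by log-convexity of `Γ`. A monotone periodic function is
constant, so `ψ₁ = S`.

Thus `ψ₂ + ψ₁² = F := S² - 2T`. Since `F(x+n) → 0`, it suffices that `F(x+1) < F(x)`, and
`F(x) - F(x+1) = 1/x⁴ + 2 S(x+1)/x² - 2/x³` is positive by the telescoping lower bound
`S(y) ≥ 1/y + 1/(2y²)`.
-/

open Real Set Filter Topology
open scoped ContDiff

theorem apply_add_nat_of_apply_add_one {f : ℝ → ℝ} (hf : ∀ y > 0, f (y + 1) = f y) {x : ℝ}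
    (hx : 0 < x) (n : ℕ) : f (x + n) = f x := by
  induction n with
  | zero => simp
  | succ n ih => rw [Nat.cast_succ, ← add_assoc, hf _ (by positivity), ih]

theorem eq_zero_of_hasDerivAt_of_apply_add_one {G G' : ℝ → ℝ}
    (hG : ∀ y > 0, HasDerivAt G (G' y) y) (hG' : ∀ y > 0, 0 ≤ G' y)
    (hper : ∀ y > 0, G (y + 1) = G y) {x : ℝ} (hx : 0 < x) : G' x = 0 := by
  have hmono : MonotoneOn G (Ioi 0) :=
    monotoneOn_of_deriv_nonneg (convex_Ioi 0)
      (fun y hy => (hG y hy).continuousAt.continuousWithinAt)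
      (fun y hy => (hG y (interior_subset hy)).differentiableAt.differentiableWithinAt)
      (fun y hy => (hG y (interior_subset hy)).deriv ▸ hG' y (interior_subset hy))
  have hle : ∀ y > 0, ∀ z > 0, G y ≤ G z := by
    intro y hy z hz
    obtain ⟨n, hn⟩ := exists_nat_ge (y - z)
    calc G y ≤ G (z + n) := hmono hy (show 0 < z + n by positivity) (by linarith)
      _ = G z := apply_add_nat_of_apply_add_one hper hz n
  have hconst : HasDerivAt G 0 x := (hasDerivAt_const x (G x)).congr_of_eventuallyEq <| by
    filter_upwards [Ioi_mem_nhds hx] with y hy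
    exact le_antisymm (hle y hy x hx) (hle x hx y hy)
  exact (hG x hx).unique hconst

theorem hasSum_sub_succ_of_antitone {g : ℕ → ℝ} (hg : Antitone g)
    (hlim : Tendsto g atTop (𝓝 0)) : HasSum (fun k => g k - g (k + 1)) (g 0) := by
  refine (hasSum_iff_tendsto_nat_of_nonneg (fun k => sub_nonneg.2 (hg k.le_succ)) _).2 ?_
  simp_rw [Finset.sum_range_sub']
  simpa using tendsto_const_nhds.sub hlim

theorem hasDerivAt_inv_add_pow (m : ℕ) {c y : ℝ} (hy : y + c ≠ 0) :
    HasDerivAt (fun y => ((y + c) ^ m)⁻¹) (-m * ((y + c) ^ (m + 1))⁻¹) y := by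
  refine ((((hasDerivAt_id' y).add_const c).fun_pow m).fun_inv
    (pow_ne_zero m hy)).congr_deriv ?_
  rcases m with _ | m
  · simp
  · simp only [Nat.cast_add, Nat.cast_one, add_tsub_cancel_right]
    field_simp
    ring

theorem summable_inv_add_pow {m : ℕ} (hm : 2 ≤ m) {x : ℝ} (hx : 0 < x) :
    Summable fun k : ℕ => ((x + k) ^ m)⁻¹ := by
  refine ((summable_one_div_nat_add_rpow x m).2 (by exact_mod_cast hm)).congr fun k => ?_
  rw [abs_of_pos (by positivity), rpow_natCast, one_div, add_comm]

theorem summable_and_hasDerivAt_tsum {g g' : ℕ → ℝ → ℝ} {m : ℕ} {C y₀ x : ℝ} (hm : 2 ≤ m)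
    (hg : ∀ k, ∀ y > 0, HasDerivAt (g k) (g' k y) y)
    (hg' : ∀ k, ∀ y > 0, |g' k y| ≤ C * ((y + k) ^ m)⁻¹)
    (hy₀ : 0 < y₀) (hg₀ : Summable fun k => g k y₀) (hx : 0 < x) :
    Summable (fun k => g k x) ∧ HasDerivAt (fun y => ∑' k, g k y) (∑' k, g' k x) x := by
  set a := min x y₀ / 2
  have ha : 0 < a := by positivity
  have hxa : x ∈ Ioi a := by simp only [mem_Ioi, a]; linarith [min_le_left x y₀]
  have hy₀a : y₀ ∈ Ioi a := by simp only [mem_Ioi, a]; linarith [min_le_right x y₀]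
  have hu : Summable fun k : ℕ => |C| * ((a + k) ^ m)⁻¹ :=
    (summable_inv_add_pow hm ha).mul_left _
  have hga : ∀ k, ∀ y ∈ Ioi a, HasDerivAt (g k) (g' k y) y :=
    fun k y hy => hg k y (ha.trans hy)
  have hbound : ∀ k, ∀ y ∈ Ioi a, ‖g' k y‖ ≤ |C| * ((a + k) ^ m)⁻¹ := by
    intro k y hy
    have hay : a ≤ y := le_of_lt hy
    have hy0 : 0 < y := ha.trans hy
    calc ‖g' k y‖ ≤ C * ((y + k) ^ m)⁻¹ := hg' k y hy0
      _ ≤ |C| * ((y + k) ^ m)⁻¹ := mul_le_mul_of_nonneg_right (le_abs_self C) (by positivity)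
      _ ≤ |C| * ((a + k) ^ m)⁻¹ := by gcongr
  exact ⟨summable_of_summable_hasDerivAt_of_isPreconnected hu isOpen_Ioi isPreconnected_Ioi hga
    hbound hy₀a hg₀ hxa, hasDerivAt_tsum_of_isPreconnected hu isOpen_Ioi isPreconnected_Ioi hga
    hbound hy₀a hg₀ hxa⟩

noncomputable def hurwitzSum (m : ℕ) (x : ℝ) : ℝ := ∑' k : ℕ, ((x + k) ^ m)⁻¹

theorem hurwitzSum_eq_inv_pow_add {m : ℕ} (hm : 2 ≤ m) {x : ℝ} (hx : 0 < x) :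
    hurwitzSum m x = (x ^ m)⁻¹ + hurwitzSum m (x + 1) := by
  rw [hurwitzSum, (summable_inv_add_pow hm hx).tsum_eq_zero_add, hurwitzSum]
  simp [add_assoc, add_comm (1 : ℝ)]

theorem tendsto_hurwitzSum_add_nat (m : ℕ) (x : ℝ) :
    Tendsto (fun n : ℕ => hurwitzSum m (x + n)) atTop (𝓝 0) := by
  refine (tendsto_sum_nat_add fun k : ℕ => ((x + k) ^ m)⁻¹).congr fun n => ?_
  simp [hurwitzSum, add_assoc, add_comm (n : ℝ)]

theorem hasDerivAt_hurwitzSum {m : ℕ} (hm : 2 ≤ m) {x : ℝ} (hx : 0 < x) :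
    HasDerivAt (hurwitzSum m) (-m * hurwitzSum (m + 1) x) x := by
  have h := (summable_and_hasDerivAt_tsum (g := fun k y => ((y + k) ^ m)⁻¹) (C := m)
    (hm.trans m.le_succ) (fun k y hy => hasDerivAt_inv_add_pow m (by positivity))
    (fun k y hy => ?_) one_pos (summable_inv_add_pow hm one_pos) hx).2
  · rwa [tsum_mul_left] at h
  · rw [abs_mul, abs_neg, Nat.abs_cast, abs_of_pos (by positivity)]

theorem inv_add_inv_two_mul_sq_le_hurwitzSum_two {x : ℝ} (hx : 0 < x) :
    x⁻¹ + (2 * x ^ 2)⁻¹ ≤ hurwitzSum 2 x := by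
  set g : ℕ → ℝ := fun k => (x + k)⁻¹ + (2 * (x + k) ^ 2)⁻¹
  have hanti : Antitone g := antitone_nat_of_succ_le fun k => by
    simp only [g, Nat.cast_succ]
    gcongr <;> linarith
  have hlim : Tendsto g atTop (𝓝 0) := by
    have h := tendsto_atTop_add_const_left atTop x tendsto_natCast_atTop_atTop
    simpa [g] using (tendsto_inv_atTop_zero.comp h).add
      (tendsto_inv_atTop_zero.comp
        (((tendsto_pow_atTop two_ne_zero).comp h).const_mul_atTop two_pos))
  have hterm : ∀ k, g k - g (k + 1) ≤ ((x + k) ^ 2)⁻¹ := fun k => by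
    have hk : 0 < x + k := by positivity
    have key : ((x + k) ^ 2)⁻¹ - (g k - g (k + 1)) = (2 * (x + k) ^ 2 * (x + k + 1) ^ 2)⁻¹ := by
      simp only [g, Nat.cast_succ]
      field_simp
      ring
    have : 0 < (2 * (x + k) ^ 2 * (x + k + 1) ^ 2)⁻¹ := by positivity
    linarith
  calc x⁻¹ + (2 * x ^ 2)⁻¹ = g 0 := by simp [g]
    _ ≤ hurwitzSum 2 x :=
      hasSum_le hterm (hasSum_sub_succ_of_antitone hanti hlim)
        (summable_inv_add_pow le_rfl hx).hasSum

theorem sq_hurwitzSum_two_sub_two_mul_hurwitzSum_three_add_one_lt {y : ℝ} (hy : 0 < y) :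
    hurwitzSum 2 (y + 1) ^ 2 - 2 * hurwitzSum 3 (y + 1) <
      hurwitzSum 2 y ^ 2 - 2 * hurwitzSum 3 y := by
  rw [hurwitzSum_eq_inv_pow_add le_rfl hy, hurwitzSum_eq_inv_pow_add (by norm_num) hy]
  have hlow := mul_le_mul_of_nonneg_left
    (inv_add_inv_two_mul_sq_le_hurwitzSum_two (by positivity : 0 < y + 1))
    (by positivity : (0 : ℝ) ≤ 2 * (y ^ 2)⁻¹)
  have key : (y ^ 4)⁻¹ + 2 * (y ^ 2)⁻¹ * ((y + 1)⁻¹ + (2 * (y + 1) ^ 2)⁻¹) - 2 * (y ^ 3)⁻¹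
      = (y ^ 4 * (y + 1) ^ 2)⁻¹ := by
    field_simp
    ring
  have hpos : 0 < (y ^ 4 * (y + 1) ^ 2)⁻¹ := by positivity
  have hsq : ((y ^ 2)⁻¹ + hurwitzSum 2 (y + 1)) ^ 2
      = (y ^ 4)⁻¹ + 2 * (y ^ 2)⁻¹ * hurwitzSum 2 (y + 1) + hurwitzSum 2 (y + 1) ^ 2 := by
    rw [add_sq, ← inv_pow, ← pow_mul]
    ring
  linarith

theorem sq_hurwitzSum_two_sub_two_mul_hurwitzSum_three_pos {x : ℝ} (hx : 0 < x) :
    0 < hurwitzSum 2 x ^ 2 - 2 * hurwitzSum 3 x := by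
  set F : ℝ → ℝ := fun y => hurwitzSum 2 y ^ 2 - 2 * hurwitzSum 3 y
  have hanti : Antitone fun n : ℕ => F (x + n) := antitone_nat_of_succ_le fun n => by
    rw [Nat.cast_succ, ← add_assoc]
    exact (sq_hurwitzSum_two_sub_two_mul_hurwitzSum_three_add_one_lt (by positivity)).le
  have hlim : Tendsto (fun n : ℕ => F (x + n)) atTop (𝓝 0) := by
    simpa [F] using ((tendsto_hurwitzSum_add_nat 2 x).pow 2).sub
      ((tendsto_hurwitzSum_add_nat 3 x).const_mul 2)
  have h₁ := hanti.le_of_tendsto hlim 1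
  have hstep := sq_hurwitzSum_two_sub_two_mul_hurwitzSum_three_add_one_lt hx
  simp only [F, Nat.cast_one] at h₁
  linarith

noncomputable def digammaSeries (x : ℝ) : ℝ := ∑' k : ℕ, (((k : ℝ) + 1)⁻¹ - (x + k)⁻¹)

theorem summable_and_hasDerivAt_digammaSeries {x : ℝ} (hx : 0 < x) :
    Summable (fun k : ℕ => ((k : ℝ) + 1)⁻¹ - (x + k)⁻¹) ∧
      HasDerivAt digammaSeries (hurwitzSum 2 x) x := by
  have hg : ∀ (k : ℕ), ∀ y > 0, HasDerivAt (fun y : ℝ => ((k : ℝ) + 1)⁻¹ - (y + k)⁻¹)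
      (((y + k) ^ 2)⁻¹) y := fun k y hy => by
    simpa using (hasDerivAt_inv_add_pow 1 (by positivity : y + k ≠ 0)).const_sub ((k : ℝ) + 1)⁻¹
  have hg₀ : Summable fun k : ℕ => ((k : ℝ) + 1)⁻¹ - (1 + (k : ℝ))⁻¹ := by
    simp [add_comm]
  exact summable_and_hasDerivAt_tsum le_rfl hg (fun k y hy => by
    rw [one_mul, abs_of_pos (by positivity)]) one_pos hg₀ hx

theorem digammaSeries_add_one {x : ℝ} (hx : 0 < x) :
    digammaSeries (x + 1) = digammaSeries x + x⁻¹ := by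
  have htel := hasSum_sub_succ_of_antitone (g := fun k : ℕ => (x + k)⁻¹)
    (antitone_nat_of_succ_le fun k => by push_cast; gcongr; linarith)
    (tendsto_inv_atTop_zero.comp
      (tendsto_atTop_add_const_left atTop x tendsto_natCast_atTop_atTop))
  have h := (summable_and_hasDerivAt_digammaSeries hx).1.hasSum.add htel
  simp only [Nat.cast_zero, add_zero, Nat.cast_succ] at h
  rw [digammaSeries, digammaSeries, ← h.tsum_eq]
  congr 1 with k
  ring

theorem contDiff_inv_Gamma : ContDiff ℝ ω fun x : ℝ => (Gamma x)⁻¹ := by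
  have h : ContDiff ℝ ω (Complex.re ∘ (fun s => (Complex.Gamma s)⁻¹) ∘ Complex.ofReal) :=
    Complex.reCLM.contDiff.comp
      ((Complex.differentiable_one_div_Gamma.contDiff.restrict_scalars ℝ).comp
        Complex.ofRealCLM.contDiff)
  convert h using 1
  funext x
  simp [Complex.Gamma_ofReal]

theorem contDiffOn_log_Gamma : ContDiffOn ℝ ω (fun x => log (Gamma x)) (Ioi 0) := by
  intro x hx
  have h := (contDiff_inv_Gamma.contDiffAt.log (inv_ne_zero (Gamma_pos_of_pos hx).ne')).neg
  simpa only [log_inv, neg_neg] using h.contDiffWithinAt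

theorem polygamma_zero : polygamma 0 = deriv fun x => log (Gamma x) := by
  funext x
  simp [polygamma]

theorem polygamma_succ (n : ℕ) : polygamma (n + 1) = deriv (polygamma n) := by
  funext x
  rw [polygamma, iteratedDeriv_succ]
  rfl

theorem contDiffOn_polygamma (n : ℕ) : ContDiffOn ℝ ω (polygamma n) (Ioi 0) := by
  induction n with
  | zero => rw [polygamma_zero]; exact contDiffOn_log_Gamma.deriv_of_isOpen isOpen_Ioi le_top
  | succ n ih => rw [polygamma_succ]; exact ih.deriv_of_isOpen isOpen_Ioi le_top

theorem differentiableAt_polygamma (n : ℕ) {x : ℝ} (hx : 0 < x) :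
    DifferentiableAt ℝ (polygamma n) x :=
  ((contDiffOn_polygamma n).contDiffAt (Ioi_mem_nhds hx)).differentiableAt (by simp)

theorem deriv_add_one_eq {f g : ℝ → ℝ} (hfg : ∀ y > 0, f (y + 1) = f y + g y) {x : ℝ}
    (hx : 0 < x) (hf : DifferentiableAt ℝ f x) (hg : DifferentiableAt ℝ g x) :
    deriv f (x + 1) = deriv f x + deriv g x := by
  rw [← deriv_comp_add_const, ← deriv_add hf hg]
  exact EventuallyEq.deriv_eq (by filter_upwards [Ioi_mem_nhds hx] with y hy using hfg y hy)

theorem polygamma_zero_add_one {x : ℝ} (hx : 0 < x) :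
    polygamma 0 (x + 1) = polygamma 0 x + x⁻¹ := by
  rw [polygamma_zero, ← deriv_log x]
  refine deriv_add_one_eq (fun y hy => ?_) hx
    ((contDiffOn_log_Gamma.contDiffAt (Ioi_mem_nhds hx)).differentiableAt (by simp))
    (differentiableAt_log hx.ne')
  rw [Gamma_add_one hy.ne', log_mul hy.ne' (Gamma_pos_of_pos hy).ne', add_comm]

theorem polygamma_one_add_one {x : ℝ} (hx : 0 < x) :
    polygamma 1 (x + 1) = polygamma 1 x - (x ^ 2)⁻¹ := by
  rw [polygamma_succ, deriv_add_one_eq (fun y hy => polygamma_zero_add_one hy) hx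
    (differentiableAt_polygamma 0 hx) (differentiableAt_inv hx.ne'), deriv_inv, sub_eq_add_neg]

theorem polygamma_one_nonneg {x : ℝ} (hx : 0 < x) : 0 ≤ polygamma 1 x := by
  have hmono : MonotoneOn (polygamma 0) (Ioi 0) := by
    rw [polygamma_zero]
    exact convexOn_log_Gamma.monotoneOn_deriv fun y hy =>
      (contDiffOn_log_Gamma.contDiffAt (Ioi_mem_nhds hy)).differentiableAt (by simp)
  rw [polygamma_succ, ← derivWithin_of_isOpen isOpen_Ioi hx]
  exact hmono.derivWithin_nonneg

theorem hurwitzSum_two_le_polygamma_one {x : ℝ} (hx : 0 < x) :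
    hurwitzSum 2 x ≤ polygamma 1 x := by
  set D : ℝ → ℝ := fun y => polygamma 1 y - hurwitzSum 2 y
  have hper : ∀ y > 0, D (y + 1) = D y := fun y hy => by
    simp only [D]
    rw [polygamma_one_add_one hy, hurwitzSum_eq_inv_pow_add le_rfl hy]
    ring
  have hlow : ∀ n : ℕ, -hurwitzSum 2 (x + n) ≤ D x := fun n => by
    rw [← apply_add_nat_of_apply_add_one hper hx n]
    linarith [polygamma_one_nonneg (show 0 < x + n by positivity)]
  have := le_of_tendsto' (tendsto_hurwitzSum_add_nat 2 x).neg hlow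
  simp only [D, neg_zero] at this
  linarith

theorem polygamma_one_eq_hurwitzSum_two {x : ℝ} (hx : 0 < x) :
    polygamma 1 x = hurwitzSum 2 x := by
  have hG : ∀ y > 0, HasDerivAt (fun y => polygamma 0 y - digammaSeries y)
      (polygamma 1 y - hurwitzSum 2 y) y := fun y hy => by
    rw [polygamma_succ]
    exact (differentiableAt_polygamma 0 hy).hasDerivAt.sub
      (summable_and_hasDerivAt_digammaSeries hy).2
  have hper : ∀ y > 0,
      polygamma 0 (y + 1) - digammaSeries (y + 1) = polygamma 0 y - digammaSeries y :=
    fun y hy => by rw [polygamma_zero_add_one hy, digammaSeries_add_one hy]; ring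
  exact sub_eq_zero.1 <| eq_zero_of_hasDerivAt_of_apply_add_one hG
    (fun y hy => sub_nonneg.2 (hurwitzSum_two_le_polygamma_one hy)) hper hx

theorem polygamma_two_eq_neg_two_mul_hurwitzSum_three {x : ℝ} (hx : 0 < x) :
    polygamma 2 x = -2 * hurwitzSum 3 x := by
  have h : polygamma 1 =ᶠ[𝓝 x] hurwitzSum 2 := by
    filter_upwards [Ioi_mem_nhds hx] with y hy using polygamma_one_eq_hurwitzSum_two hy
  rw [polygamma_succ, h.deriv_eq, (hasDerivAt_hurwitzSum le_rfl hx).deriv]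
  norm_num

/-- Lemma `psi-diff`: for every `x > 0`, `ψ₂(x) + ψ₁(x)² > 0`. -/
theorem polygamma_two_add_sq_polygamma_one_pos (x : ℝ) (hx : 0 < x) :
    0 < polygamma 2 x + polygamma 1 x ^ 2 := by
  rw [polygamma_two_eq_neg_two_mul_hurwitzSum_three hx, polygamma_one_eq_hurwitzSum_two hx]
  linarith [sq_hurwitzSum_two_sub_two_mul_hurwitzSum_three_pos hx]
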